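/- Let n = 2 and let P ∈ U(2,2) be the permutation matrix with rows (0,1,0,0), (1,0,0,0), (0,0,0,1), (0,0,1,0). For M ∈ U(2,2) with block decomposition M = ((A,B),(C,D)) set z := det(iC + D). Then w(P,M) = w(M,P) = (1/(2π))·(Arg(−z) − Arg(z) − Arg(−1)), where Arg denotes the principal argument with values in (−π,π]. -/

import Mathlib

noncomputable section
open Matrix Complex
open scoped ComplexOrder

/-- Complex 2n×2n matrices, written in n×n blocks. -/
abbrev HMat (n : ℕ) : Type := Matrix (Fin n ⊕ Fin n) (Fin n ⊕ Fin n) ℂ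

/-- The standard alternating matrix I = ((0,-E),(E,0)). -/
def Imat (n : ℕ) : HMat n := Matrix.fromBlocks 0 (-1) 1 0

/-- The unitary group U(n,n). -/
def UGrp (n : ℕ) : Set (HMat n) := {M | Mᴴ * Imat n * M = Imat n}

/-- The Hermitian upper half-plane: Z = X + iY with X Hermitian and
Y = (Z - Zᴴ)/(2i) Hermitian positive definite. -/
def UHP (n : ℕ) : Set (Matrix (Fin n) (Fin n) ℂ) :=
  {Z | ((2 * Complex.I)⁻¹ • (Z - Zᴴ)).PosDef}

/-- The action M⟨Z⟩ = (AZ+B)(CZ+D)⁻¹. -/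
def matAct {n : ℕ} (M : HMat n) (Z : Matrix (Fin n) (Fin n) ℂ) :
    Matrix (Fin n) (Fin n) ℂ :=
  (M.toBlocks₁₁ * Z + M.toBlocks₁₂) * (M.toBlocks₂₁ * Z + M.toBlocks₂₂)⁻¹

/-- The automorphy factor J(M,Z) = det(CZ+D). -/
def Jfac {n : ℕ} (M : HMat n) (Z : Matrix (Fin n) (Fin n) ℂ) : ℂ :=
  (M.toBlocks₂₁ * Z + M.toBlocks₂₂).det

/-- The distinguished point iE of the upper half-plane. -/
def iE (n : ℕ) : Matrix (Fin n) (Fin n) ℂ := Complex.I • 1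

/-- `L` is the continuous choice of the argument of J(M,Z), normalized so that
`L M (iE)` is the principal value. -/
def IsArgOfJ (n : ℕ) (L : HMat n → Matrix (Fin n) (Fin n) ℂ → ℝ) : Prop :=
  ∀ M ∈ UGrp n, ContinuousOn (L M) (UHP n) ∧
    (∀ Z ∈ UHP n,
      Complex.exp (Complex.I * (L M Z : ℝ)) = Jfac M Z / ((‖Jfac M Z‖ : ℝ) : ℂ)) ∧
    L M (iE n) ∈ Set.Ioc (-Real.pi) Real.pi

/-- w(M,N;Z) = (1/2π)(L(MN,Z) - L(M,N⟨Z⟩) - L(N,Z)). -/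
def wAt {n : ℕ} (L : HMat n → Matrix (Fin n) (Fin n) ℂ → ℝ)
    (M N : HMat n) (Z : Matrix (Fin n) (Fin n) ℂ) : ℝ :=
  (L (M * N) Z - L M (matAct N Z) - L N Z) / (2 * Real.pi)

/-- The cocycle w(M,N), i.e. the common value of w(M,N;Z), evaluated at Z = iE. -/
def wcoc {n : ℕ} (L : HMat n → Matrix (Fin n) (Fin n) ℂ → ℝ) (M N : HMat n) : ℝ :=
  wAt L M N (iE n)

/-!
Since `P = diag(Q, Q)` with `Q` the swap matrix, `det Q = -1`, the factor `J(P, ·)` is the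
constant `-1`; a continuous argument of a constant on the connected set `ℋ₂` is itself constant,
so `L(P, ·) ≡ π`. The cocycle relation `J(MN, Z) = J(M, N⟨Z⟩) J(N, Z)` together with
`P⟨iE⟩ = iE` gives `J(PM, iE) = J(MP, iE) = -z`, and as `M⟨iE⟩ ∈ ℋ₂` every term of `w` at `iE`
is either a principal argument or `π`.
-/

section Blocks

variable {n : ℕ}

lemma mul_fromRows_eq {m : Type*} (M : HMat n) (X₁ X₂ : Matrix (Fin n) m ℂ) :
    M * fromRows X₁ X₂ = fromRows (M.toBlocks₁₁ * X₁ + M.toBlocks₁₂ * X₂)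
      (M.toBlocks₂₁ * X₁ + M.toBlocks₂₂ * X₂) := by
  conv_lhs => rw [← fromBlocks_toBlocks M]
  exact fromBlocks_mul_fromRows ..

lemma conjTranspose_fromRows_mul_Imat_mul {m : Type*} (X₁ X₂ : Matrix (Fin n) m ℂ) :
    (fromRows X₁ X₂)ᴴ * Imat n * fromRows X₁ X₂ = X₂ᴴ * X₁ - X₁ᴴ * X₂ := by
  rw [conjTranspose_fromRows_eq_fromCols_conjTranspose, Imat, fromCols_mul_fromBlocks,
    fromCols_mul_fromRows]
  simp [sub_eq_add_neg, add_comm]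

lemma mul_mem_UGrp {M N : HMat n} (hM : M ∈ UGrp n) (hN : N ∈ UGrp n) :
    M * N ∈ UGrp n := by
  change (M * N)ᴴ * Imat n * (M * N) = Imat n
  rw [conjTranspose_mul, show Nᴴ * Mᴴ * Imat n * (M * N) = Nᴴ * (Mᴴ * Imat n * M) * N by
    simp only [Matrix.mul_assoc], hM, hN]

lemma Jfac_mul (M N : HMat n) {Z : Matrix (Fin n) (Fin n) ℂ} (hN : Jfac N Z ≠ 0) :
    Jfac (M * N) Z = Jfac M (matAct N Z) * Jfac N Z := by
  have hS : IsUnit (N.toBlocks₂₁ * Z + N.toBlocks₂₂).det := isUnit_iff_ne_zero.mpr hN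
  have h := mul_fromRows_eq (M * N) Z 1
  rw [Matrix.mul_assoc, mul_fromRows_eq N, mul_fromRows_eq M] at h
  have hrow := (fromRows_inj h).2
  simp only [Matrix.mul_one] at hrow
  rw [Jfac, Jfac, Jfac, ← hrow, ← det_mul, matAct, Matrix.add_mul, Matrix.mul_assoc,
    Matrix.mul_assoc, nonsing_inv_mul _ hS, Matrix.mul_one]

end Blocks

section UpperHalfPlane

variable {n : ℕ}

lemma conjTranspose_mul_sub_of_mem_UGrp {M : HMat n} (hM : M ∈ UGrp n)
    (Z : Matrix (Fin n) (Fin n) ℂ) :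
    (M.toBlocks₂₁ * Z + M.toBlocks₂₂)ᴴ * (M.toBlocks₁₁ * Z + M.toBlocks₁₂)
      - (M.toBlocks₁₁ * Z + M.toBlocks₁₂)ᴴ * (M.toBlocks₂₁ * Z + M.toBlocks₂₂) = Z - Zᴴ := by
  set V : Matrix (Fin n ⊕ Fin n) (Fin n) ℂ := fromRows Z 1
  calc _ = (M * V)ᴴ * Imat n * (M * V) := by
        rw [mul_fromRows_eq, conjTranspose_fromRows_mul_Imat_mul]
        simp only [Matrix.mul_one]
    _ = Vᴴ * (Mᴴ * Imat n * M) * V := by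
        simp only [conjTranspose_mul, Matrix.mul_assoc]
    _ = Z - Zᴴ := by
        rw [hM, conjTranspose_fromRows_mul_Imat_mul]
        simp

lemma matAct_mem_UHP {M : HMat n} (hM : M ∈ UGrp n) {Z : Matrix (Fin n) (Fin n) ℂ}
    (hZ : Z ∈ UHP n) (hJ : Jfac M Z ≠ 0) : matAct M Z ∈ UHP n := by
  set S := M.toBlocks₂₁ * Z + M.toBlocks₂₂
  have hS : IsUnit S.det := isUnit_iff_ne_zero.mpr hJ
  have hsub : matAct M Z - (matAct M Z)ᴴ = (S⁻¹)ᴴ * (Z - Zᴴ) * S⁻¹ := by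
    rw [← conjTranspose_mul_sub_of_mem_UGrp hM Z, matAct, Matrix.mul_sub, Matrix.sub_mul,
      ← Matrix.mul_assoc, ← conjTranspose_mul, mul_nonsing_inv _ hS, conjTranspose_one,
      Matrix.one_mul, Matrix.mul_assoc, Matrix.mul_assoc, mul_nonsing_inv _ hS, Matrix.mul_one,
      conjTranspose_mul]
  change ((2 * I)⁻¹ • (matAct M Z - (matAct M Z)ᴴ)).PosDef
  rw [hsub, ← Matrix.smul_mul, ← Matrix.mul_smul]
  have hS' : IsUnit S⁻¹ := (isUnit_iff_isUnit_det _).mpr (isUnit_nonsing_inv_det _ hS)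
  exact PosDef.conjTranspose_mul_mul_same hZ (mulVec_injective_iff_isUnit.mpr hS')

lemma iE_mem_UHP : iE n ∈ UHP n := by
  have h : (2 * I)⁻¹ • (iE n - (iE n)ᴴ) = 1 := by
    rw [iE, conjTranspose_smul, conjTranspose_one, ← sub_smul, smul_smul, star_def, conj_I,
      sub_neg_eq_add, ← two_mul, inv_mul_cancel₀ (by simp), one_smul]
  change ((2 * I)⁻¹ • (iE n - (iE n)ᴴ)).PosDef
  exact h ▸ PosDef.one

lemma convex_setOf_posDef {m : Type*} [Fintype m] :
    Convex ℝ {A : Matrix m m ℂ | A.PosDef} := by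
  intro A hA B hB a b ha hb hab
  rcases ha.eq_or_lt with rfl | ha
  · simpa [show b = 1 by linarith] using hB
  · exact (hA.smul ha).add_posSemidef (hB.posSemidef.smul hb)

lemma convex_UHP : Convex ℝ (UHP n) := by
  have hlin : IsLinearMap ℝ fun Z : Matrix (Fin n) (Fin n) ℂ => (2 * I)⁻¹ • (Z - Zᴴ) := by
    constructor
    · intro Z W
      rw [conjTranspose_add, ← smul_add]
      abel_nf
    · intro c Z
      rw [conjTranspose_smul, star_trivial, ← smul_sub, smul_comm]
  exact convex_setOf_posDef.is_linear_preimage hlin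

end UpperHalfPlane

lemma IsPreconnected.eq_of_exp_mul_I_eq {X : Type*} [TopologicalSpace X] {S : Set X}
    (hS : IsPreconnected S) {f : X → ℝ} (hf : ContinuousOn f S) {c : ℂ}
    (hc : ∀ x ∈ S, exp (I * f x) = c) {x y : X} (hx : x ∈ S) (hy : y ∈ S) : f y = f x := by
  have hmaps : Set.MapsTo (fun z => f z - f x) S (AddSubgroup.zmultiples (2 * Real.pi)) := by
    intro z hz
    have hexp : Circle.exp (f z) = Circle.exp (f x) := Circle.ext <| by
      rw [Circle.coe_exp, Circle.coe_exp, mul_comm, hc z hz, mul_comm, hc x hx]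
    obtain ⟨k, hk⟩ := Circle.exp_eq_exp.mp hexp
    exact ⟨k, by simp only [hk, zsmul_eq_mul]; ring⟩
  have hdisc : IsDiscrete (AddSubgroup.zmultiples (2 * Real.pi) : Set ℝ) :=
    isDiscrete_iff_discreteTopology.mpr
      (inferInstanceAs (DiscreteTopology (AddSubgroup.zmultiples (2 * Real.pi))))
  have h := hS.constant_of_mapsTo hdisc (hf.sub continuousOn_const) hmaps hy hx
  simpa [sub_eq_zero] using h

lemma ne_zero_of_exp_mul_I_eq {θ : ℝ} {w : ℂ} (hw : exp (I * θ) = w / ((‖w‖ : ℝ) : ℂ)) :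
    w ≠ 0 := by
  rintro rfl
  simp [exp_ne_zero] at hw

lemma eq_arg_of_exp_mul_I_eq {θ : ℝ} (hθ : θ ∈ Set.Ioc (-Real.pi) Real.pi) {w : ℂ}
    (hw : exp (I * θ) = w / ((‖w‖ : ℝ) : ℂ)) : θ = arg w := by
  have hnorm : 0 < ‖w‖⁻¹ := inv_pos.mpr (norm_pos_iff.mpr (ne_zero_of_exp_mul_I_eq hw))
  rw [← arg_mul_real hnorm, ofReal_inv, ← div_eq_mul_inv, ← hw, mul_comm, exp_mul_I,
    arg_cos_add_sin_mul_I hθ]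

namespace IsArgOfJ

variable {n : ℕ} {L : HMat n → Matrix (Fin n) (Fin n) ℂ → ℝ} {M : HMat n}

lemma Jfac_ne_zero (hL : IsArgOfJ n L) (hM : M ∈ UGrp n) {Z : Matrix (Fin n) (Fin n) ℂ}
    (hZ : Z ∈ UHP n) : Jfac M Z ≠ 0 :=
  ne_zero_of_exp_mul_I_eq ((hL M hM).2.1 Z hZ)

lemma apply_iE (hL : IsArgOfJ n L) (hM : M ∈ UGrp n) : L M (iE n) = arg (Jfac M (iE n)) :=
  eq_arg_of_exp_mul_I_eq (hL M hM).2.2 ((hL M hM).2.1 _ iE_mem_UHP)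

lemma eqOn_arg_of_Jfac_eq (hL : IsArgOfJ n L) (hM : M ∈ UGrp n) {c : ℂ}
    (hc : ∀ Z ∈ UHP n, Jfac M Z = c) {Z : Matrix (Fin n) (Fin n) ℂ}
    (hZ : Z ∈ UHP n) : L M Z = arg c := by
  have hconst := convex_UHP.isPreconnected.eq_of_exp_mul_I_eq (hL M hM).1
    (fun W hW => by rw [(hL M hM).2.1 W hW, hc W hW]) iE_mem_UHP hZ
  rw [hconst, hL.apply_iE hM, hc _ iE_mem_UHP]

end IsArgOfJ

section BlockDiagonal

variable {n : ℕ} {Q : Matrix (Fin n) (Fin n) ℂ}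

lemma fromBlocks_diagonal_mem_UGrp (hQ : Qᴴ * Q = 1) : fromBlocks Q 0 0 Q ∈ UGrp n := by
  change (fromBlocks Q 0 0 Q)ᴴ * Imat n * fromBlocks Q 0 0 Q = Imat n
  simp [Imat, fromBlocks_conjTranspose, fromBlocks_multiply, hQ]

lemma Jfac_fromBlocks_diagonal (Z : Matrix (Fin n) (Fin n) ℂ) :
    Jfac (fromBlocks Q 0 0 Q) Z = Q.det := by
  simp [Jfac]

lemma matAct_fromBlocks_diagonal_iE (hQ : IsUnit Q.det) :
    matAct (fromBlocks Q 0 0 Q) (iE n) = iE n := by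
  simp [matAct, iE, mul_nonsing_inv _ hQ]

end BlockDiagonal

/-- the value of the cocycle against the permutation matrix P. -/
theorem stmt5 (L : HMat 2 → Matrix (Fin 2) (Fin 2) ℂ → ℝ) (hL : IsArgOfJ 2 L)
    (M : HMat 2) (hM : M ∈ UGrp 2)
    (P : HMat 2) (hP : P = Matrix.fromBlocks !![0, 1; 1, 0] 0 0 !![0, 1; 1, 0])
    (z : ℂ) (hz : z = (Complex.I • M.toBlocks₂₁ + M.toBlocks₂₂).det) :
    wcoc L P M
        = (Complex.arg (-z) - Complex.arg z - Complex.arg (-1)) / (2 * Real.pi) ∧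
    wcoc L M P
        = (Complex.arg (-z) - Complex.arg z - Complex.arg (-1)) / (2 * Real.pi) := by
  have hQ : (!![0, 1; 1, 0] : Matrix (Fin 2) (Fin 2) ℂ)ᴴ * !![0, 1; 1, 0] = 1 := by
    ext i j
    fin_cases i <;> fin_cases j <;> simp [Matrix.mul_apply]
  have hJP : ∀ Z, Jfac P Z = -1 := fun Z => by
    simp [hP, Jfac_fromBlocks_diagonal, det_fin_two]
  have hPiE : matAct P (iE 2) = iE 2 :=
    hP ▸ matAct_fromBlocks_diagonal_iE (by simp [det_fin_two])
  have hPU : P ∈ UGrp 2 := hP ▸ fromBlocks_diagonal_mem_UGrp hQ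
  have hJM : Jfac M (iE 2) = z := by rw [Jfac, iE, Matrix.mul_smul, Matrix.mul_one, hz]
  have hJM0 : Jfac M (iE 2) ≠ 0 := hL.Jfac_ne_zero hM iE_mem_UHP
  have hLP : ∀ Z ∈ UHP 2, L P Z = Real.pi := fun Z hZ => by
    rw [hL.eqOn_arg_of_Jfac_eq hPU (fun W _ => hJP W) hZ, arg_neg_one]
  have hJPM : Jfac (P * M) (iE 2) = -z := by rw [Jfac_mul _ _ hJM0, hJP, hJM]; ring
  have hJMP : Jfac (M * P) (iE 2) = -z := by
    rw [Jfac_mul _ _ (by simp [hJP]), hPiE, hJP, hJM]; ring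
  constructor
  · rw [wcoc, wAt, hL.apply_iE (mul_mem_UGrp hPU hM), hJPM,
      hLP _ (matAct_mem_UHP hM iE_mem_UHP hJM0), hL.apply_iE hM, hJM, arg_neg_one]
    ring
  · rw [wcoc, wAt, hL.apply_iE (mul_mem_UGrp hM hPU), hJMP, hPiE, hL.apply_iE hM, hJM,
      hLP _ iE_mem_UHP, arg_neg_one]
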